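/- arXiv:1706.02176 — 2 statements merged into one kernel-verified Lean document; each statement's English description precedes it below -/
import Mathlib

section
/- Let V be reflexive, α₁, α₂: V → P(V') with a common point ṽ where both are nonempty, and gᵢ weakly representing αᵢ (i = 1,2). If inf_{(v,v*)} {g₁(v, v* - z*) + g₂(v, z*)} → +∞ as ‖z*‖_{V'} → +∞, then the partial inf-convolution (g₁ ⊕ g₂)(v,v*) := inf_{z* ∈ V'} {g₁(v, v* - z*) + g₂(v, z*)} is weakly lower semi-continuous, satisfies g₁ ⊕ g₂ ≥ π, and represents the sum operator α₁ + α₂. If moreover g₁ and g₂ are convex, then g₁ ⊕ g₂ is convex. -/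
/-!
Fix `(v, v*)`. By coercivity every minimizing sequence of `z* ↦ g₁(v, v* - z*) + g₂(v, z*)` is
bounded, and bounded sequences in the dual of a reflexive space have weak-* convergent
subsequences: the closed span of the sequence is a separable reflexive space, so its dual is
separable and sequential Banach–Alaoglu applies in its bidual. By weak lower semicontinuity of
`g₁` and `g₂` the limit attains the infimum, and this survives letting `(v, v*)` vary along a
weakly convergent sequence, which is the lower semicontinuity of `g₁ ⊕ g₂`. Attainment also
shows that `(g₁ ⊕ g₂)(v, v*) = ⟨v*, v⟩` forces `g₁` and `g₂` to equal the pairing at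
`(v, v* - ζ)` and `(v, ζ)`, i.e. `v* ∈ α₁ v + α₂ v`. Convexity holds because convex
combinations of near-minimizers are admissible.
-/

open Filter Topology

/-- Weak convergence of a sequence in `V`. -/
def WeakConvSeq {V : Type*} [NormedAddCommGroup V] [NormedSpace ℝ V]
    (v : ℕ → V) (v0 : V) : Prop :=
  ∀ φ : StrongDual ℝ V, Tendsto (fun n => φ (v n)) atTop (𝓝 (φ v0))

/-- Weak convergence of a sequence in `V'`. -/
def WeakStarConvSeq {V : Type*} [NormedAddCommGroup V] [NormedSpace ℝ V]
    (f : ℕ → StrongDual ℝ V) (f0 : StrongDual ℝ V) : Prop :=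
  ∀ w : V, Tendsto (fun n => f n w) atTop (𝓝 (f0 w))

/-- Sequential lower semicontinuity w.r.t. the weak topology of `V × V'`. -/
def WeakSeqLSC {V : Type*} [NormedAddCommGroup V] [NormedSpace ℝ V]
    (f : V × StrongDual ℝ V → EReal) : Prop :=
  ∀ (v : ℕ → V) (vs : ℕ → StrongDual ℝ V) (v0 : V) (vs0 : StrongDual ℝ V),
    WeakConvSeq v v0 → WeakStarConvSeq vs vs0 →
    f (v0, vs0) ≤ liminf (fun n => f (v n, vs n)) atTop

open Function TopologicalSpace NormedSpace

section DualSpace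

variable {E : Type*} [NormedAddCommGroup E] [NormedSpace ℝ E]

theorem Submodule.exists_strongDual_forall_eq_zero_ne_zero_of_notMem {M : Submodule ℝ E}
    (hM : IsClosed (M : Set E)) {x : E} (hx : x ∉ M) :
    ∃ f : StrongDual ℝ E, (∀ y ∈ M, f y = 0) ∧ f x ≠ 0 := by
  -- makes `E ⧸ M` a normed space
  have := hM
  obtain ⟨g, hg⟩ := SeparatingDual.exists_ne_zero (R := ℝ) (x := M.mkQ x)
    (by simpa using hx)
  exact ⟨g.comp M.mkQL, fun y hy => by simp [(Submodule.Quotient.mk_eq_zero M).2 hy], hg⟩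

variable (E) in
theorem separableSpace_of_separableSpace_strongDual [SeparableSpace (StrongDual ℝ E)] :
    SeparableSpace E := by
  set f := denseSeq (StrongDual ℝ E)
  have hnorming : ∀ n, ∃ x : E, ‖x‖ ≤ 1 ∧ ‖f n‖ ≤ 2 * ‖f n x‖ := by
    intro n
    rcases eq_or_ne (f n) 0 with h | h
    · exact ⟨0, by simp, by simp [h]⟩
    · obtain ⟨x, hx, hfx⟩ := (f n).exists_lt_apply_of_lt_opNorm
        (half_lt_self (norm_pos_iff.2 h))
      exact ⟨x, hx.le, by linarith⟩
  choose x hx₁ hx₂ using hnorming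
  set M := (Submodule.span ℝ (Set.range x)).topologicalClosure
  suffices hM : ∀ y, y ∈ M by
    have : IsSeparable (M : Set E) := by
      rw [Submodule.topologicalClosure_coe]
      exact (Set.countable_range x).isSeparable.span.closure
    exact isSeparable_univ_iff.1 (by simpa [Set.eq_univ_of_forall hM] using this)
  by_contra! ⟨y, hy⟩
  obtain ⟨F, hFM, hFy⟩ := M.exists_strongDual_forall_eq_zero_ne_zero_of_notMem
    (Submodule.isClosed_topologicalClosure _) hy
  have hFx : ∀ n, F (x n) = 0 := fun n =>
    hFM _ (Submodule.le_topologicalClosure _ (Submodule.subset_span ⟨n, rfl⟩))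
  -- `F` vanishes on the `x n`, which norm the dense sequence `f n`, so `F` is far from every `f n`
  have hfar : ∀ n, ‖F‖ ≤ 3 * dist F (f n) := by
    intro n
    have h := ((f n - F).le_opNorm (x n)).trans
      (mul_le_of_le_one_right (norm_nonneg _) (hx₁ n))
    rw [sub_apply, hFx, sub_zero, ← dist_eq_norm, dist_comm] at h
    calc ‖F‖ ≤ ‖f n‖ + dist F (f n) := by
          simpa [dist_eq_norm, add_comm] using norm_le_norm_add_norm_sub' F (f n)
      _ ≤ 3 * dist F (f n) := by linarith [hx₂ n]
  have hF : 0 < ‖F‖ := norm_pos_iff.2 fun h => hFy (by simp [h])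
  obtain ⟨n, hn⟩ := (denseRange_denseSeq (StrongDual ℝ E)).exists_dist_lt F
    (by positivity : 0 < ‖F‖ / 4)
  linarith [hfar n]

theorem surjective_inclusionInDoubleDual_strongDual (h : Surjective (inclusionInDoubleDual ℝ E)) :
    Surjective (inclusionInDoubleDual ℝ (StrongDual ℝ E)) := by
  intro Ψ
  refine ⟨Ψ.comp (inclusionInDoubleDual ℝ E), ContinuousLinearMap.ext fun Φ => ?_⟩
  obtain ⟨x, rfl⟩ := h Φ
  rfl

theorem Submodule.surjective_inclusionInDoubleDual (h : Surjective (inclusionInDoubleDual ℝ E))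
    {Y : Submodule ℝ E} (hY : IsClosed (Y : Set E)) : Surjective (inclusionInDoubleDual ℝ Y) := by
  intro Φ
  set restrict : StrongDual ℝ E →L[ℝ] StrongDual ℝ Y := ContinuousLinearMap.precomp ℝ Y.subtypeL
  obtain ⟨x, hx⟩ := h (Φ.comp restrict)
  have hΦ : ∀ f : StrongDual ℝ E, f x = Φ (restrict f) := fun f =>
    congrArg (fun Ψ => Ψ f) hx
  have hxY : x ∈ Y := by
    by_contra hxY
    obtain ⟨f, hfY, hfx⟩ := Y.exists_strongDual_forall_eq_zero_ne_zero_of_notMem hY hxY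
    have : restrict f = 0 := ContinuousLinearMap.ext fun y => hfY y y.2
    exact hfx (by rw [hΦ, this, map_zero])
  refine ⟨⟨x, hxY⟩, ContinuousLinearMap.ext fun g => ?_⟩
  obtain ⟨f, hfg, -⟩ := exists_extension_norm_eq Y g
  have : restrict f = g := ContinuousLinearMap.ext hfg
  rw [dual_def, ← hfg, ← this]
  exact hΦ f

theorem exists_strictMono_forall_tendsto_of_separableSpace [SeparableSpace E]
    (hrefl : Surjective (inclusionInDoubleDual ℝ E)) {y : ℕ → E} {R : ℝ} (hy : ∀ n, ‖y n‖ ≤ R) :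
    ∃ φ : ℕ → ℕ, ∃ η : E, StrictMono φ ∧
      ∀ g : StrongDual ℝ E, Tendsto (fun k => g (y (φ k))) atTop (𝓝 (g η)) := by
  have : SeparableSpace (StrongDual ℝ (StrongDual ℝ E)) :=
    hrefl.denseRange.separableSpace (inclusionInDoubleDual ℝ E).continuous
  have : SeparableSpace (StrongDual ℝ E) := separableSpace_of_separableSpace_strongDual _
  obtain ⟨Φ, -, φ, hφ, hlim⟩ := WeakDual.isSeqCompact_closedBall ℝ (StrongDual ℝ E) 0 R
    (x := fun n => StrongDual.toWeakDual (inclusionInDoubleDual ℝ E (y n)))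
    fun n => by simpa using (double_dual_bound ℝ E (y n)).trans (hy n)
  obtain ⟨η, hη⟩ := hrefl (WeakDual.toStrongDual Φ)
  refine ⟨φ, η, hφ, fun g => ?_⟩
  have h := ((WeakDual.eval_continuous g).tendsto Φ).comp hlim
  rwa [show Φ g = g η from (DFunLike.congr_fun hη g).symm] at h

theorem exists_strictMono_weakStarConvSeq (hrefl : Surjective (inclusionInDoubleDual ℝ E))
    {z : ℕ → StrongDual ℝ E} {R : ℝ} (hz : ∀ n, ‖z n‖ ≤ R) :
    ∃ φ : ℕ → ℕ, ∃ ζ : StrongDual ℝ E, StrictMono φ ∧ WeakStarConvSeq (z ∘ φ) ζ := by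
  have hzY (n : ℕ) : z n ∈ (Submodule.span ℝ (Set.range z)).topologicalClosure :=
    Submodule.le_topologicalClosure _ (Submodule.subset_span ⟨n, rfl⟩)
  have : SeparableSpace (Submodule.span ℝ (Set.range z)).topologicalClosure :=
    IsSeparable.separableSpace <| by
      rw [Submodule.topologicalClosure_coe]
      exact (Set.countable_range z).isSeparable.span.closure
  obtain ⟨φ, η, hφ, hlim⟩ := exists_strictMono_forall_tendsto_of_separableSpace
    (Submodule.surjective_inclusionInDoubleDual (surjective_inclusionInDoubleDual_strongDual hrefl)
      (Submodule.isClosed_topologicalClosure _))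
    (y := fun n => ⟨z n, hzY n⟩) hz
  exact ⟨φ, η, hφ, fun w => hlim ((inclusionInDoubleDual ℝ E w).comp (Submodule.subtypeL _))⟩

theorem WeakConvSeq.comp_tendsto {v : ℕ → E} {v0 : E} (hv : WeakConvSeq v v0) {n : ℕ → ℕ}
    (hn : Tendsto n atTop atTop) : WeakConvSeq (v ∘ n) v0 :=
  fun φ => (hv φ).comp hn

theorem WeakStarConvSeq.comp_tendsto {f : ℕ → StrongDual ℝ E} {f0 : StrongDual ℝ E}
    (hf : WeakStarConvSeq f f0) {n : ℕ → ℕ} (hn : Tendsto n atTop atTop) :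
    WeakStarConvSeq (f ∘ n) f0 :=
  fun w => (hf w).comp hn

theorem WeakStarConvSeq.sub {f g : ℕ → StrongDual ℝ E} {f0 g0 : StrongDual ℝ E}
    (hf : WeakStarConvSeq f f0) (hg : WeakStarConvSeq g g0) : WeakStarConvSeq (f - g) (f0 - g0) :=
  fun w => (hf w).sub (hg w)

end DualSpace

theorem EReal.exists_coe_mul_lt_of_coe_mul_iInf_lt {ι : Type*} [Nonempty ι] {f : ι → EReal}
    {t : ℝ} (ht : 0 ≤ t) {a : EReal} (h : (t : EReal) * ⨅ i, f i < a) :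
    ∃ i, (t : EReal) * f i < a := by
  rcases ht.eq_or_lt with rfl | ht
  · simpa using h
  by_contra! hle
  have htE : (0 : EReal) < t := by exact_mod_cast ht
  refine h.not_ge ((EReal.div_le_iff_le_mul htE (EReal.coe_ne_top t)).1 (le_iInf fun i => ?_))
  exact (EReal.div_le_iff_le_mul htE (EReal.coe_ne_top t)).2 (hle i)

theorem EReal.eq_coe_and_eq_coe_of_add_le {A B : EReal} {a b : ℝ} (ha : (a : EReal) ≤ A)
    (hb : (b : EReal) ≤ B) (h : A + B ≤ ((a + b : ℝ) : EReal)) : A = a ∧ B = b := by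
  induction A using EReal.rec <;> induction B using EReal.rec <;>
    simp_all [← EReal.coe_add]
  constructor <;> linarith

def IsConvexEReal {E : Type*} [AddCommGroup E] [Module ℝ E] (f : E → EReal) : Prop :=
  ∀ p q : E, ∀ t : ℝ, 0 ≤ t → t ≤ 1 →
    f (t • p + (1 - t) • q) ≤ (t : EReal) * f p + ((1 - t : ℝ) : EReal) * f q

section PartialInfConv

variable {V : Type*} [NormedAddCommGroup V] [NormedSpace ℝ V]
  {g₁ g₂ : V × StrongDual ℝ V → EReal}

def IsCoerciveSum (g₁ g₂ : V × StrongDual ℝ V → EReal) : Prop :=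
  ∀ C : ℝ, ∃ R : ℝ, ∀ z : StrongDual ℝ V, R < ‖z‖ →
    ∀ (v : V) (v' : StrongDual ℝ V), (C : EReal) ≤ g₁ (v, v' - z) + g₂ (v, z)

noncomputable def partialInfConv (g₁ g₂ : V × StrongDual ℝ V → EReal)
    (p : V × StrongDual ℝ V) : EReal :=
  ⨅ z : StrongDual ℝ V, g₁ (p.1, p.2 - z) + g₂ (p.1, z)

theorem pairing_le_partialInfConv (hg₁ : ∀ p : V × StrongDual ℝ V, ((p.2 p.1 : ℝ) : EReal) ≤ g₁ p)
    (hg₂ : ∀ p : V × StrongDual ℝ V, ((p.2 p.1 : ℝ) : EReal) ≤ g₂ p) (p : V × StrongDual ℝ V) :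
    ((p.2 p.1 : ℝ) : EReal) ≤ partialInfConv g₁ g₂ p :=
  le_iInf fun z => by
    calc ((p.2 p.1 : ℝ) : EReal) = (((p.2 - z) p.1 : ℝ) : EReal) + ((z p.1 : ℝ) : EReal) := by
          rw [← EReal.coe_add, sub_apply, sub_add_cancel]
      _ ≤ g₁ (p.1, p.2 - z) + g₂ (p.1, z) := add_le_add (hg₁ (p.1, p.2 - z)) (hg₂ (p.1, z))

theorem exists_add_le_of_frequently_partialInfConv_lt
    (hrefl : Surjective (inclusionInDoubleDual ℝ V)) (hg₁ : WeakSeqLSC g₁) (hg₂ : WeakSeqLSC g₂)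
    (hcoer : IsCoerciveSum g₁ g₂)
    {v : ℕ → V} {vs : ℕ → StrongDual ℝ V} {v0 : V} {vs0 : StrongDual ℝ V}
    (hv : WeakConvSeq v v0) (hvs : WeakStarConvSeq vs vs0) {r : ℝ}
    (h : ∀ ε > 0, ∃ᶠ n in atTop, partialInfConv g₁ g₂ (v n, vs n) < ((r + ε : ℝ) : EReal)) :
    ∃ ζ, g₁ (v0, vs0 - ζ) + g₂ (v0, ζ) ≤ r := by
  have happrox (k : ℕ) : ∃ n ≥ k, ∃ z,
      g₁ (v n, vs n - z) + g₂ (v n, z) < ((r + 1 / (k + 1) : ℝ) : EReal) := by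
    obtain ⟨n, hn, hlt⟩ := frequently_atTop.1 (h _ Nat.one_div_pos_of_nat) k
    exact ⟨n, hn, iInf_lt_iff.1 hlt⟩
  choose n hn z hz using happrox
  obtain ⟨R, hR⟩ := hcoer (r + 1)
  have hzR (k : ℕ) : ‖z k‖ ≤ R := by
    refine not_lt.1 fun hk => (hR _ hk _ _).not_gt ((hz k).trans_le ?_)
    exact EReal.coe_le_coe_iff.2 (by gcongr; exact (div_le_one (by positivity)).2 (by simp))
  obtain ⟨φ, ζ, hφ, hζ⟩ := exists_strictMono_weakStarConvSeq hrefl hzR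
  have hnφ : Tendsto (n ∘ φ) atTop atTop :=
    (tendsto_atTop_mono hn tendsto_id).comp hφ.tendsto_atTop
  have hbound : Tendsto (fun k => ((r + 1 / (φ k + 1) : ℝ) : EReal)) atTop (𝓝 r) := by
    have := (tendsto_one_div_add_atTop_nhds_zero_nat.comp hφ.tendsto_atTop).const_add r
    rw [add_zero] at this
    exact (continuous_coe_real_ereal.tendsto _).comp this
  refine ⟨ζ, ?_⟩
  calc g₁ (v0, vs0 - ζ) + g₂ (v0, ζ)
      ≤ liminf (fun k => g₁ (v (n (φ k)), vs (n (φ k)) - z (φ k))) atTop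
        + liminf (fun k => g₂ (v (n (φ k)), z (φ k))) atTop :=
        add_le_add (hg₁ _ _ _ _ (hv.comp_tendsto hnφ) ((hvs.comp_tendsto hnφ).sub hζ))
          (hg₂ _ _ _ _ (hv.comp_tendsto hnφ) hζ)
    _ ≤ liminf (fun k => g₁ (v (n (φ k)), vs (n (φ k)) - z (φ k))
          + g₂ (v (n (φ k)), z (φ k))) atTop := EReal.le_liminf_add
    _ ≤ liminf (fun k => ((r + 1 / (φ k + 1) : ℝ) : EReal)) atTop :=
        liminf_le_liminf (Eventually.of_forall fun k => (hz (φ k)).le)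
    _ = r := hbound.liminf_eq

theorem partialInfConv_weakSeqLSC (hrefl : Surjective (inclusionInDoubleDual ℝ V))
    (hg₁ : WeakSeqLSC g₁) (hg₂ : WeakSeqLSC g₂)
    (hcoer : IsCoerciveSum g₁ g₂) :
    WeakSeqLSC (partialInfConv g₁ g₂) := by
  intro v vs v0 vs0 hv hvs
  refine EReal.le_of_forall_lt_iff_le.1 fun r hr => ?_
  obtain ⟨ζ, hζ⟩ := exists_add_le_of_frequently_partialInfConv_lt hrefl hg₁ hg₂ hcoer hv hvs
    fun ε hε => (frequently_lt_of_liminf_lt (by isBoundedDefault) hr).mono fun n hn =>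
      hn.trans (EReal.coe_lt_coe_iff.2 (lt_add_of_pos_right r hε))
  exact (iInf_le _ ζ).trans hζ

theorem partialInfConv_eq_pairing_iff (hrefl : Surjective (inclusionInDoubleDual ℝ V))
    (hg₁lsc : WeakSeqLSC g₁) (hg₂lsc : WeakSeqLSC g₂)
    (hg₁ : ∀ p : V × StrongDual ℝ V, ((p.2 p.1 : ℝ) : EReal) ≤ g₁ p)
    (hg₂ : ∀ p : V × StrongDual ℝ V, ((p.2 p.1 : ℝ) : EReal) ≤ g₂ p)
    (hcoer : IsCoerciveSum g₁ g₂)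
    (p : V × StrongDual ℝ V) :
    partialInfConv g₁ g₂ p = ((p.2 p.1 : ℝ) : EReal) ↔
      ∃ z, g₁ (p.1, p.2 - z) = (((p.2 - z) p.1 : ℝ) : EReal) ∧
        g₂ (p.1, z) = ((z p.1 : ℝ) : EReal) := by
  constructor
  · intro hp
    obtain ⟨ζ, hζ⟩ := exists_add_le_of_frequently_partialInfConv_lt hrefl hg₁lsc hg₂lsc hcoer
      (v := fun _ => p.1) (vs := fun _ => p.2) (fun _ => tendsto_const_nhds)
      (fun _ => tendsto_const_nhds) (r := p.2 p.1) fun ε hε => Frequently.of_forall fun _ =>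
        hp.trans_lt (EReal.coe_lt_coe_iff.2 (lt_add_of_pos_right _ hε))
    refine ⟨ζ, EReal.eq_coe_and_eq_coe_of_add_le (hg₁ (p.1, p.2 - ζ)) (hg₂ (p.1, ζ)) ?_⟩
    rwa [sub_apply, sub_add_cancel]
  · rintro ⟨z, h₁, h₂⟩
    refine le_antisymm ((iInf_le _ z).trans_eq ?_) (pairing_le_partialInfConv hg₁ hg₂ p)
    rw [h₁, h₂, ← EReal.coe_add, sub_apply, sub_add_cancel]

theorem isConvexEReal_partialInfConv
    (hg₁ : ∀ p : V × StrongDual ℝ V, ((p.2 p.1 : ℝ) : EReal) ≤ g₁ p)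
    (hg₂ : ∀ p : V × StrongDual ℝ V, ((p.2 p.1 : ℝ) : EReal) ≤ g₂ p)
    (hc₁ : IsConvexEReal g₁) (hc₂ : IsConvexEReal g₂) :
    IsConvexEReal (partialInfConv g₁ g₂) := by
  intro p q t ht₀ ht₁
  have hsum (z₁ z₂ : StrongDual ℝ V) : partialInfConv g₁ g₂ (t • p + (1 - t) • q) ≤
      (t : EReal) * (g₁ (p.1, p.2 - z₁) + g₂ (p.1, z₁))
        + ((1 - t : ℝ) : EReal) * (g₁ (q.1, q.2 - z₂) + g₂ (q.1, z₂)) := by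
    calc partialInfConv g₁ g₂ (t • p + (1 - t) • q)
        ≤ g₁ (t • (p.1, p.2 - z₁) + (1 - t) • (q.1, q.2 - z₂))
          + g₂ (t • (p.1, z₁) + (1 - t) • (q.1, z₂)) := by
          refine (iInf_le _ (t • z₁ + (1 - t) • z₂)).trans_eq ?_
          congr 2
          ext <;> simp
          ring
      _ ≤ ((t : EReal) * g₁ (p.1, p.2 - z₁) + ((1 - t : ℝ) : EReal) * g₁ (q.1, q.2 - z₂))
          + ((t : EReal) * g₂ (p.1, z₁) + ((1 - t : ℝ) : EReal) * g₂ (q.1, z₂)) :=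
          add_le_add (hc₁ _ _ t ht₀ ht₁) (hc₂ _ _ t ht₀ ht₁)
      _ = _ := by
          rw [EReal.left_distrib_of_nonneg_of_ne_top (by exact_mod_cast ht₀) (EReal.coe_ne_top _),
            EReal.left_distrib_of_nonneg_of_ne_top (by exact_mod_cast sub_nonneg.2 ht₁)
              (EReal.coe_ne_top _), add_add_add_comm]
  have hne_bot (s : ℝ) (hs : 0 ≤ s) (x : V × StrongDual ℝ V) :
      (s : EReal) * partialInfConv g₁ g₂ x ≠ ⊥ :=
    (EReal.mul_ne_bot _ _).2 ⟨.inl (EReal.coe_ne_bot s),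
      .inr (ne_bot_of_le_ne_bot (EReal.coe_ne_bot _) (pairing_le_partialInfConv hg₁ hg₂ x)),
      .inl (EReal.coe_ne_top s), .inl (by exact_mod_cast hs)⟩
  refine EReal.le_add_of_forall_gt (.inl (hne_bot t ht₀ p))
    (.inr (hne_bot _ (sub_nonneg.2 ht₁) q)) fun a ha b hb => ?_
  obtain ⟨z₁, hz₁⟩ := EReal.exists_coe_mul_lt_of_coe_mul_iInf_lt ht₀ ha
  obtain ⟨z₂, hz₂⟩ := EReal.exists_coe_mul_lt_of_coe_mul_iInf_lt (sub_nonneg.2 ht₁) hb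
  exact (hsum z₁ z₂).trans (add_le_add hz₁.le hz₂.le)

end PartialInfConv

theorem partial_inf_convolution_represents_sum_general
    (V : Type*) [NormedAddCommGroup V] [NormedSpace ℝ V]
    (hrefl : Function.Surjective (NormedSpace.inclusionInDoubleDual ℝ V))
    (α₁ α₂ : V → Set (StrongDual ℝ V))
    (g₁ g₂ : V × StrongDual ℝ V → EReal)
    (hg₁lsc : WeakSeqLSC g₁) (hg₂lsc : WeakSeqLSC g₂)
    (hg₁ge : ∀ p : V × StrongDual ℝ V, ((p.2 p.1 : ℝ) : EReal) ≤ g₁ p)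
    (hg₂ge : ∀ p : V × StrongDual ℝ V, ((p.2 p.1 : ℝ) : EReal) ≤ g₂ p)
    (hg₁iff : ∀ p : V × StrongDual ℝ V,
      g₁ p = ((p.2 p.1 : ℝ) : EReal) ↔ p.2 ∈ α₁ p.1)
    (hg₂iff : ∀ p : V × StrongDual ℝ V,
      g₂ p = ((p.2 p.1 : ℝ) : EReal) ↔ p.2 ∈ α₂ p.1)
    (hcoer : ∀ C : ℝ, ∃ R : ℝ, ∀ z : StrongDual ℝ V, R < ‖z‖ →
      ∀ (v : V) (v' : StrongDual ℝ V), (C : EReal) ≤ g₁ (v, v' - z) + g₂ (v, z))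
    (G : V × StrongDual ℝ V → EReal)
    (hG : ∀ p : V × StrongDual ℝ V,
      G p = ⨅ z : StrongDual ℝ V, (g₁ (p.1, p.2 - z) + g₂ (p.1, z))) :
    WeakSeqLSC G ∧
    (∀ p : V × StrongDual ℝ V, ((p.2 p.1 : ℝ) : EReal) ≤ G p) ∧
    (∀ p : V × StrongDual ℝ V,
      G p = ((p.2 p.1 : ℝ) : EReal) ↔
        ∃ u w, u ∈ α₁ p.1 ∧ w ∈ α₂ p.1 ∧ p.2 = u + w) ∧
    ((∀ p q : V × StrongDual ℝ V, ∀ t : ℝ, 0 ≤ t → t ≤ 1 →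
        g₁ (t • p + (1 - t) • q) ≤ (t : EReal) * g₁ p + ((1 - t : ℝ) : EReal) * g₁ q) →
     (∀ p q : V × StrongDual ℝ V, ∀ t : ℝ, 0 ≤ t → t ≤ 1 →
        g₂ (t • p + (1 - t) • q) ≤ (t : EReal) * g₂ p + ((1 - t : ℝ) : EReal) * g₂ q) →
     (∀ p q : V × StrongDual ℝ V, ∀ t : ℝ, 0 ≤ t → t ≤ 1 →
        G (t • p + (1 - t) • q) ≤ (t : EReal) * G p + ((1 - t : ℝ) : EReal) * G q)) := by
  obtain rfl : G = partialInfConv g₁ g₂ := funext hG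
  refine ⟨partialInfConv_weakSeqLSC hrefl hg₁lsc hg₂lsc hcoer,
    pairing_le_partialInfConv hg₁ge hg₂ge, fun p => ?_, isConvexEReal_partialInfConv hg₁ge hg₂ge⟩
  rw [partialInfConv_eq_pairing_iff hrefl hg₁lsc hg₂lsc hg₁ge hg₂ge hcoer]
  constructor
  · rintro ⟨z, h₁, h₂⟩
    exact ⟨p.2 - z, z, (hg₁iff (p.1, p.2 - z)).1 h₁, (hg₂iff (p.1, z)).1 h₂, by abel⟩
  · rintro ⟨u, w, hu, hw, hp⟩
    refine ⟨w, ?_, (hg₂iff (p.1, w)).2 hw⟩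
    rw [hp, add_sub_cancel_right]
    exact (hg₁iff (p.1, u)).2 hu

/-- the partial inf-convolution of two weak representative functions,
under a coerciveness condition, weakly represents the sum operator; it is convex if
both terms are. -/
theorem partial_inf_convolution_represents_sum
    (V : Type*) [NormedAddCommGroup V] [NormedSpace ℝ V] [CompleteSpace V]
    (hrefl : Function.Surjective (NormedSpace.inclusionInDoubleDual ℝ V))
    (α₁ α₂ : V → Set (StrongDual ℝ V))
    (hcommon : ∃ v : V, (α₁ v).Nonempty ∧ (α₂ v).Nonempty)
    (g₁ g₂ : V × StrongDual ℝ V → EReal)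
    (hg₁lsc : WeakSeqLSC g₁) (hg₂lsc : WeakSeqLSC g₂)
    (hg₁ge : ∀ p : V × StrongDual ℝ V, ((p.2 p.1 : ℝ) : EReal) ≤ g₁ p)
    (hg₂ge : ∀ p : V × StrongDual ℝ V, ((p.2 p.1 : ℝ) : EReal) ≤ g₂ p)
    (hg₁iff : ∀ p : V × StrongDual ℝ V,
      g₁ p = ((p.2 p.1 : ℝ) : EReal) ↔ p.2 ∈ α₁ p.1)
    (hg₂iff : ∀ p : V × StrongDual ℝ V,
      g₂ p = ((p.2 p.1 : ℝ) : EReal) ↔ p.2 ∈ α₂ p.1)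
    (hcoer : ∀ C : ℝ, ∃ R : ℝ, ∀ z : StrongDual ℝ V, R < ‖z‖ →
      ∀ (v : V) (v' : StrongDual ℝ V), (C : EReal) ≤ g₁ (v, v' - z) + g₂ (v, z))
    (G : V × StrongDual ℝ V → EReal)
    (hG : ∀ p : V × StrongDual ℝ V,
      G p = ⨅ z : StrongDual ℝ V, (g₁ (p.1, p.2 - z) + g₂ (p.1, z))) :
    WeakSeqLSC G ∧
    (∀ p : V × StrongDual ℝ V, ((p.2 p.1 : ℝ) : EReal) ≤ G p) ∧
    (∀ p : V × StrongDual ℝ V,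
      G p = ((p.2 p.1 : ℝ) : EReal) ↔
        ∃ u w, u ∈ α₁ p.1 ∧ w ∈ α₂ p.1 ∧ p.2 = u + w) ∧
    ((∀ p q : V × StrongDual ℝ V, ∀ t : ℝ, 0 ≤ t → t ≤ 1 →
        g₁ (t • p + (1 - t) • q) ≤ (t : EReal) * g₁ p + ((1 - t : ℝ) : EReal) * g₁ q) →
     (∀ p q : V × StrongDual ℝ V, ∀ t : ℝ, 0 ≤ t → t ≤ 1 →
        g₂ (t • p + (1 - t) • q) ≤ (t : EReal) * g₂ p + ((1 - t : ℝ) : EReal) * g₂ q) →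
     (∀ p q : V × StrongDual ℝ V, ∀ t : ℝ, 0 ≤ t → t ≤ 1 →
        G (t • p + (1 - t) • q) ≤ (t : EReal) * G p + ((1 - t : ℝ) : EReal) * G q)) :=
  partial_inf_convolution_represents_sum_general V hrefl α₁ α₂ g₁ g₂ hg₁lsc hg₂lsc hg₁ge hg₂ge
    hg₁iff hg₂iff hcoer G hG
end

section
/- Let α(v) := β(v,v) be a semi-monotone operator, and for each z ∈ H let f_z be the Fitzpatrick function of the maximal monotone operator β(z,·). Then the function φ(v,v*) := f_v(v,v*) is weakly lower semi-continuous on V × V', satisfies φ(v,v*) ≥ ⟨v*,v⟩ everywhere, and φ(v,v*) = ⟨v*,v⟩ if and only if v* ∈ α(v); i.e., φ weakly represents α. -/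
/-!
Fitzpatrick's inequality `⟨v*, v⟩ ≤ f_A(v, v*)`, with equality exactly on the graph of `A`, holds
for every maximal monotone `A`; applied to `A = β(v, ·)` at the point `v` this gives the last two
claims. For weak lower semicontinuity, fix a point `(u, u*)` of the graph of `β(v₀, ·)`. If
`vₙ ⇀ v₀` and `vₙ* ⇀ v₀*`, the compact embedding gives `vₙ → v₀` in `H`, so lower semicontinuity
of `β` in its first argument yields `uₙ* ∈ β(vₙ, u)` with `uₙ* → u*` strongly. The
`(u, uₙ*)`-terms of the suprema defining `φ(vₙ, vₙ*)` then converge to the `(u, u*)`-term of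
`φ(v₀, v₀*)`, since strong convergence in `V'` pairs with weak (hence bounded) convergence in `V`.
-/

open Filter Topology

/-- A multivalued operator `α : V → 𝒫(V')` is monotone. -/
def MonotoneOp {V : Type*} [NormedAddCommGroup V] [NormedSpace ℝ V]
    (α : V → Set (StrongDual ℝ V)) : Prop :=
  ∀ v w v' w', v' ∈ α v → w' ∈ α w → 0 ≤ (v' - w') (v - w)

/-- `α` is maximal monotone. -/
def MaximalMonotoneOp {V : Type*} [NormedAddCommGroup V] [NormedSpace ℝ V]
    (α : V → Set (StrongDual ℝ V)) : Prop :=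
  MonotoneOp α ∧
    ∀ β : V → Set (StrongDual ℝ V), MonotoneOp β → (∀ v, α v ⊆ β v) → ∀ v, β v = α v

section Fitzpatrick

variable {V : Type*} [NormedAddCommGroup V] [NormedSpace ℝ V]

noncomputable def fitzpatrick (A : V → Set (StrongDual ℝ V)) (p : V × StrongDual ℝ V) : EReal :=
  ⨆ q : {q : V × StrongDual ℝ V // q.2 ∈ A q.1}, ((p.2 q.1.1 - q.1.2 (q.1.1 - p.1) : ℝ) : EReal)

lemma fitzpatrick_term_eq (p : V × StrongDual ℝ V) (u : V) (u' : StrongDual ℝ V) :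
    p.2 u - u' (u - p.1) = p.2 p.1 - (p.2 - u') (p.1 - u) := by
  simp only [sub_apply, map_sub]
  ring

lemma le_fitzpatrick {A : V → Set (StrongDual ℝ V)} (p : V × StrongDual ℝ V) {u : V}
    {u' : StrongDual ℝ V} (hu : u' ∈ A u) :
    ((p.2 u - u' (u - p.1) : ℝ) : EReal) ≤ fitzpatrick A p :=
  le_iSup (fun q : {q : V × StrongDual ℝ V // q.2 ∈ A q.1} =>
    ((p.2 q.1.1 - q.1.2 (q.1.1 - p.1) : ℝ) : EReal)) ⟨(u, u'), hu⟩

lemma fitzpatrick_le_pairing_iff {A : V → Set (StrongDual ℝ V)} {p : V × StrongDual ℝ V} :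
    fitzpatrick A p ≤ ((p.2 p.1 : ℝ) : EReal) ↔
      ∀ u u', u' ∈ A u → 0 ≤ (p.2 - u') (p.1 - u) := by
  simp only [fitzpatrick, iSup_le_iff, Subtype.forall, Prod.forall, EReal.coe_le_coe_iff,
    fitzpatrick_term_eq, sub_le_self_iff]

lemma MonotoneOp.fitzpatrick_le_pairing {A : V → Set (StrongDual ℝ V)} (hA : MonotoneOp A)
    {p : V × StrongDual ℝ V} (hp : p.2 ∈ A p.1) : fitzpatrick A p ≤ ((p.2 p.1 : ℝ) : EReal) :=
  fitzpatrick_le_pairing_iff.2 fun _ _ hu => hA _ _ _ _ hp hu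

lemma MaximalMonotoneOp.mem_of_forall_nonneg {A : V → Set (StrongDual ℝ V)}
    (hA : MaximalMonotoneOp A) {v : V} {v' : StrongDual ℝ V}
    (hv : ∀ u u', u' ∈ A u → 0 ≤ (v' - u') (v - u)) : v' ∈ A v := by
  let A' : V → Set (StrongDual ℝ V) := fun u => A u ∪ {x | u = v ∧ x = v'}
  have hA' : MonotoneOp A' := by
    have hswap : ∀ u u', (u' - v') (u - v) = (v' - u') (v - u) := fun u u' => by
      simp only [sub_apply, map_sub]
      ring
    rintro a b a' b' (ha | ⟨rfl, rfl⟩) (hb | ⟨rfl, rfl⟩)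
    · exact hA.1 a b a' b' ha hb
    · exact hswap a a' ▸ hv a a' ha
    · exact hv b b' hb
    · simp
  rw [← hA.2 A' hA' (fun _ => Set.subset_union_left) v]
  exact Or.inr ⟨rfl, rfl⟩

lemma MaximalMonotoneOp.pairing_le_fitzpatrick {A : V → Set (StrongDual ℝ V)}
    (hA : MaximalMonotoneOp A) (p : V × StrongDual ℝ V) :
    ((p.2 p.1 : ℝ) : EReal) ≤ fitzpatrick A p := by
  by_cases hp : p.2 ∈ A p.1
  · simpa using le_fitzpatrick p hp
  · exact (not_le.1 fun h => hp (hA.mem_of_forall_nonneg (fitzpatrick_le_pairing_iff.1 h))).le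

lemma MaximalMonotoneOp.fitzpatrick_eq_pairing_iff {A : V → Set (StrongDual ℝ V)}
    (hA : MaximalMonotoneOp A) (p : V × StrongDual ℝ V) :
    fitzpatrick A p = ((p.2 p.1 : ℝ) : EReal) ↔ p.2 ∈ A p.1 :=
  ⟨fun h => hA.mem_of_forall_nonneg (fitzpatrick_le_pairing_iff.1 h.le),
    fun hp => le_antisymm (hA.1.fitzpatrick_le_pairing hp) (hA.pairing_le_fitzpatrick p)⟩

end Fitzpatrick

section WeakConvergence

variable {V : Type*} [NormedAddCommGroup V] [NormedSpace ℝ V] {v : ℕ → V} {v0 : V}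

lemma WeakConvSeq.const_sub (hv : WeakConvSeq v v0) (u : V) :
    WeakConvSeq (fun n => u - v n) (u - v0) := fun ψ => by
  simpa only [map_sub] using tendsto_const_nhds.sub (hv ψ)

lemma WeakConvSeq.exists_norm_le (hv : WeakConvSeq v v0) : ∃ C, ∀ n, ‖v n‖ ≤ C := by
  have hbdd : ∀ ψ : StrongDual ℝ V, ∃ C, ∀ n, ‖NormedSpace.inclusionInDoubleDual ℝ V (v n) ψ‖ ≤ C :=
    fun ψ => by
      obtain ⟨C, hC⟩ := (hv ψ).norm.bddAbove_range
      exact ⟨C, fun n => hC ⟨n, rfl⟩⟩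
  obtain ⟨C, hC⟩ := banach_steinhaus hbdd
  exact ⟨C, fun n => (NormedSpace.inclusionInDoubleDualLi ℝ).norm_map (v n) ▸ hC n⟩

lemma WeakConvSeq.tendsto_apply {f : ℕ → StrongDual ℝ V} {f0 : StrongDual ℝ V}
    (hv : WeakConvSeq v v0) (hf : Tendsto f atTop (𝓝 f0)) :
    Tendsto (fun n => f n (v n)) atTop (𝓝 (f0 v0)) := by
  obtain ⟨C, hC⟩ := hv.exists_norm_le
  have hsmall : Tendsto (fun n => (f n - f0) (v n)) atTop (𝓝 0) := by
    refine squeeze_zero_norm (fun n => ((f n - f0).le_opNorm (v n)).trans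
      (mul_le_mul_of_nonneg_left (hC n) (norm_nonneg _))) ?_
    simpa using (tendsto_iff_norm_sub_tendsto_zero.1 hf).mul_const C
  simpa using hsmall.add (hv f0)

end WeakConvergence

theorem fitzpatrick_le_liminf {V : Type*} [NormedAddCommGroup V] [NormedSpace ℝ V]
    {A : V → V → Set (StrongDual ℝ V)}
    (hA : ∀ (v : ℕ → V) (v0 : V), WeakConvSeq v v0 → ∀ u u', u' ∈ A v0 u →
      ∃ un : ℕ → StrongDual ℝ V, (∀ n, un n ∈ A (v n) u) ∧ Tendsto un atTop (𝓝 u'))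
    {v : ℕ → V} {vs : ℕ → StrongDual ℝ V} {v0 : V} {vs0 : StrongDual ℝ V}
    (hv : WeakConvSeq v v0) (hvs : WeakStarConvSeq vs vs0) :
    fitzpatrick (A v0) (v0, vs0) ≤ liminf (fun n => fitzpatrick (A (v n)) (v n, vs n)) atTop := by
  refine iSup_le ?_
  rintro ⟨⟨u, u'⟩, hu⟩
  obtain ⟨un, hun, hlim⟩ := hA v v0 hv u u' hu
  have hterm : Tendsto (fun n => vs n u - un n (u - v n)) atTop (𝓝 (vs0 u - u' (u - v0))) :=
    (hvs u).sub ((hv.const_sub u).tendsto_apply hlim)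
  calc ((vs0 u - u' (u - v0) : ℝ) : EReal)
      = liminf (fun n => ((vs n u - un n (u - v n) : ℝ) : EReal)) atTop :=
        (EReal.tendsto_coe.2 hterm).liminf_eq.symm
    _ ≤ liminf (fun n => fitzpatrick (A (v n)) (v n, vs n)) atTop :=
        liminf_le_liminf (Eventually.of_forall fun n => le_fitzpatrick (v n, vs n) (hun n))

theorem semimonotone_representation_general
    (V : Type*) [NormedAddCommGroup V] [NormedSpace ℝ V]
    (H : Type*) [NormedAddCommGroup H] [InnerProductSpace ℝ H]
    (e : V →L[ℝ] H)
    (hcompact : ∀ (vn : ℕ → V) (v0 : V), WeakConvSeq vn v0 →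
      Tendsto (fun n => e (vn n)) atTop (𝓝 (e v0)))
    (β : H → V → Set (StrongDual ℝ V))
    (hmax : ∀ z : H, MaximalMonotoneOp (β z))
    (hlsc : ∀ (z : H) (u : V) (u' : StrongDual ℝ V), u' ∈ β z u →
      ∀ zn : ℕ → H, Tendsto zn atTop (𝓝 z) →
        ∃ un : ℕ → StrongDual ℝ V,
          (∀ n, un n ∈ β (zn n) u) ∧ Tendsto un atTop (𝓝 u'))
    (φ : V × StrongDual ℝ V → EReal)
    (hφ : ∀ p : V × StrongDual ℝ V,
      φ p = ⨆ q : {q : V × StrongDual ℝ V // q.2 ∈ β (e p.1) q.1},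
        ((p.2 q.1.1 - q.1.2 (q.1.1 - p.1) : ℝ) : EReal)) :
    (∀ (v : ℕ → V) (vs : ℕ → StrongDual ℝ V) (v0 : V)
        (vs0 : StrongDual ℝ V),
      WeakConvSeq v v0 → WeakStarConvSeq vs vs0 →
      φ (v0, vs0) ≤ liminf (fun n => φ (v n, vs n)) atTop) ∧
    (∀ p : V × StrongDual ℝ V, ((p.2 p.1 : ℝ) : EReal) ≤ φ p) ∧
    (∀ p : V × StrongDual ℝ V,
      φ p = ((p.2 p.1 : ℝ) : EReal) ↔ p.2 ∈ β (e p.1) p.1) := by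
  obtain rfl : φ = fun p => fitzpatrick (β (e p.1)) p := funext hφ
  refine ⟨fun v vs v0 vs0 hv hvs => fitzpatrick_le_liminf (A := fun v => β (e v)) ?_ hv hvs,
    fun p => (hmax _).pairing_le_fitzpatrick p, fun p => (hmax _).fitzpatrick_eq_pairing_iff p⟩
  exact fun v v0 hv u u' hu => hlsc _ u u' hu _ (hcompact v v0 hv)

/-- for a semi-monotone operator `α(v) = β(v,v)`, the function
`φ(v,v*) := f_v(v,v*)`, with `f_z` the Fitzpatrick function of `β(z,·)`, is weakly
(sequentially) lower semi-continuous, dominates the duality pairing, and equals it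
exactly on the graph of `α`; i.e. `φ` weakly represents `α`. -/
theorem semimonotone_representation
    (V : Type*) [NormedAddCommGroup V] [NormedSpace ℝ V] [CompleteSpace V]
    [TopologicalSpace.SeparableSpace V]
    (hrefl : Function.Surjective (NormedSpace.inclusionInDoubleDual ℝ V))
    (H : Type*) [NormedAddCommGroup H] [InnerProductSpace ℝ H] [CompleteSpace H]
    (e : V →L[ℝ] H) (he : Function.Injective e) (hdense : DenseRange e)
    (hcompact : ∀ (vn : ℕ → V) (v0 : V), WeakConvSeq vn v0 →
      Tendsto (fun n => e (vn n)) atTop (𝓝 (e v0)))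
    (β : H → V → Set (StrongDual ℝ V))
    (hmax : ∀ z : H, MaximalMonotoneOp (β z))
    (hlsc : ∀ (z : H) (u : V) (u' : StrongDual ℝ V), u' ∈ β z u →
      ∀ zn : ℕ → H, Tendsto zn atTop (𝓝 z) →
        ∃ un : ℕ → StrongDual ℝ V,
          (∀ n, un n ∈ β (zn n) u) ∧ Tendsto un atTop (𝓝 u'))
    (φ : V × StrongDual ℝ V → EReal)
    (hφ : ∀ p : V × StrongDual ℝ V,
      φ p = ⨆ q : {q : V × StrongDual ℝ V // q.2 ∈ β (e p.1) q.1},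
        ((p.2 q.1.1 - q.1.2 (q.1.1 - p.1) : ℝ) : EReal)) :
    (∀ (v : ℕ → V) (vs : ℕ → StrongDual ℝ V) (v0 : V)
        (vs0 : StrongDual ℝ V),
      WeakConvSeq v v0 → WeakStarConvSeq vs vs0 →
      φ (v0, vs0) ≤ liminf (fun n => φ (v n, vs n)) atTop) ∧
    (∀ p : V × StrongDual ℝ V, ((p.2 p.1 : ℝ) : EReal) ≤ φ p) ∧
    (∀ p : V × StrongDual ℝ V,
      φ p = ((p.2 p.1 : ℝ) : EReal) ↔ p.2 ∈ β (e p.1) p.1) :=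
  semimonotone_representation_general V H e hcompact β hmax hlsc φ hφ
end
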